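/- Let V be a finite set, let 0 < ε' ≤ 1, and let w, w' be nonnegative weight functions on the unordered pairs of distinct elements of V such that every cut is preserved within a (1 ± ε') factor: for every S ⊆ V, (1−ε')·Σ_{u∈S, v∉S} w_{uv} ≤ Σ_{u∈S, v∉S} w'_{uv} ≤ (1+ε')·Σ_{u∈S, v∉S} w_{uv}. Then for every subset C ⊆ V, the within-C weights satisfy |Σ_{{u,v}⊆C} w_{uv} − Σ_{{u,v}⊆C} w'_{uv}| ≤ ε'·Σ_{u∈C} deg_w(u), where deg_w(u) = Σ_{v≠u} w_{uv}. -/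

import Mathlib

/-!
Writing `deg C` for the total weight incident to `C` and `cut C` for the weight leaving `C`,
the within-`C` weight, counted over ordered pairs, is `deg C - cut C`. The singleton cuts
`({u}, V ∖ {u})` show that every degree, hence `deg C`, moves by at most `ε' · deg C`, and the
cut `(C, V ∖ C)` moves by at most `ε' · cut C ≤ ε' · deg C`; halving the sum of the two errors
gives the bound.
-/

open Finset

section

variable {V M : Type*} [DecidableEq V]

theorem sum_offDiag_eq_sum_sum_erase [AddCommMonoid M] (C : Finset V) (f : V → V → M) :
    ∑ p ∈ C.offDiag, f p.1 p.2 = ∑ u ∈ C, ∑ v ∈ C.erase u, f u v :=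
  sum_finset_product' _ _ _ fun p => by
    simp only [mem_offDiag, mem_erase]
    tauto

variable [Fintype V]

def cutWeight [AddCommMonoid M] (w : V → V → M) (S : Finset V) : M :=
  ∑ u ∈ S, ∑ v ∈ Sᶜ, w u v

def weightedDegree [AddCommMonoid M] (w : V → V → M) (u : V) : M :=
  ∑ v ∈ univ.erase u, w u v

theorem cutWeight_singleton [AddCommMonoid M] (w : V → V → M) (u : V) :
    cutWeight w {u} = weightedDegree w u := by
  simp [cutWeight, weightedDegree, compl_singleton]

theorem weightedDegree_eq_sum_erase_add_sum_compl [AddCommGroup M] (w : V → V → M)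
    {C : Finset V} {u : V} (hu : u ∈ C) :
    weightedDegree w u = ∑ v ∈ C.erase u, w u v + ∑ v ∈ Cᶜ, w u v := by
  have h := sum_add_sum_compl C (w u)
  rw [← sum_erase_add _ _ hu, ← sum_erase_add _ _ (mem_univ u)] at h
  unfold weightedDegree
  exact add_right_cancel (b := w u u) (by rw [← h]; abel)

theorem sum_offDiag_eq_sum_weightedDegree_sub_cutWeight [AddCommGroup M] (w : V → V → M)
    (C : Finset V) :
    ∑ p ∈ C.offDiag, w p.1 p.2 = ∑ u ∈ C, weightedDegree w u - cutWeight w C := by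
  rw [sum_offDiag_eq_sum_sum_erase, cutWeight, ← sum_sub_distrib]
  exact sum_congr rfl fun u hu => by
    rw [weightedDegree_eq_sum_erase_add_sum_compl w hu, add_sub_cancel_right]

theorem cutWeight_le_sum_weightedDegree {w : V → V → ℝ} (hw : ∀ u v, 0 ≤ w u v)
    (C : Finset V) : cutWeight w C ≤ ∑ u ∈ C, weightedDegree w u :=
  sum_le_sum fun u hu => sum_le_sum_of_subset_of_nonneg
    (fun v hv => mem_erase.2 ⟨fun h => mem_compl.1 (h ▸ hv) hu, mem_univ v⟩)
    fun v _ _ => hw u v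

theorem abs_sub_le_mul_of_mul_le_of_le_mul {ε a b : ℝ} (hlo : (1 - ε) * a ≤ b)
    (hhi : b ≤ (1 + ε) * a) : |b - a| ≤ ε * a :=
  abs_sub_le_iff.2 ⟨by linarith, by linarith⟩

end

theorem cut_sparsifier_within_cluster_general {V : Type*} [Fintype V] [DecidableEq V]
    (ε' : ℝ) (hε0 : 0 < ε')
    (w w' : V → V → ℝ)
    (hnn : ∀ u v, 0 ≤ w u v)
    (hcut : ∀ S : Finset V,
      (1 - ε') * (∑ u ∈ S, ∑ v ∈ Sᶜ, w u v) ≤ (∑ u ∈ S, ∑ v ∈ Sᶜ, w' u v) ∧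
      (∑ u ∈ S, ∑ v ∈ Sᶜ, w' u v) ≤ (1 + ε') * (∑ u ∈ S, ∑ v ∈ Sᶜ, w u v)) :
    ∀ C : Finset V,
      |(∑ p ∈ C.offDiag, w p.1 p.2) / 2 - (∑ p ∈ C.offDiag, w' p.1 p.2) / 2| ≤
        ε' * ∑ u ∈ C, ∑ v ∈ Finset.univ.erase u, w u v := by
  have hcut_abs (S : Finset V) : |cutWeight w' S - cutWeight w S| ≤ ε' * cutWeight w S :=
    abs_sub_le_mul_of_mul_le_of_le_mul (hcut S).1 (hcut S).2
  intro C
  have hdeg : |∑ u ∈ C, weightedDegree w' u - ∑ u ∈ C, weightedDegree w u|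
      ≤ ε' * ∑ u ∈ C, weightedDegree w u := by
    rw [← sum_sub_distrib, mul_sum]
    refine (abs_sum_le_sum_abs _ _).trans (sum_le_sum fun u _ => ?_)
    simpa only [cutWeight_singleton] using hcut_abs {u}
  have hC : |cutWeight w' C - cutWeight w C| ≤ ε' * ∑ u ∈ C, weightedDegree w u :=
    (hcut_abs C).trans <|
      mul_le_mul_of_nonneg_left (cutWeight_le_sum_weightedDegree hnn C) hε0.le
  change _ ≤ ε' * ∑ u ∈ C, weightedDegree w u
  rw [sum_offDiag_eq_sum_weightedDegree_sub_cutWeight w,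
    sum_offDiag_eq_sum_weightedDegree_sub_cutWeight w', abs_le]
  rw [abs_le] at hdeg hC
  constructor <;> linarith [hdeg.1, hdeg.2, hC.1, hC.2]

/-- if a nonnegative pairwise weight function `w'` preserves every cut of
`w` within a `(1 ± ε')` factor, then for every subset `C` the within-`C` weights agree
up to an additive error of `ε'` times the total `w`-weight incident to `C`. -/
theorem cut_sparsifier_within_cluster {V : Type*} [Fintype V] [DecidableEq V]
    (ε' : ℝ) (hε0 : 0 < ε') (hε1 : ε' ≤ 1)
    (w w' : V → V → ℝ)
    (hsym : ∀ u v, w u v = w v u) (hsym' : ∀ u v, w' u v = w' v u)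
    (hnn : ∀ u v, 0 ≤ w u v) (hnn' : ∀ u v, 0 ≤ w' u v)
    (hcut : ∀ S : Finset V,
      (1 - ε') * (∑ u ∈ S, ∑ v ∈ Sᶜ, w u v) ≤ (∑ u ∈ S, ∑ v ∈ Sᶜ, w' u v) ∧
      (∑ u ∈ S, ∑ v ∈ Sᶜ, w' u v) ≤ (1 + ε') * (∑ u ∈ S, ∑ v ∈ Sᶜ, w u v)) :
    ∀ C : Finset V,
      |(∑ p ∈ C.offDiag, w p.1 p.2) / 2 - (∑ p ∈ C.offDiag, w' p.1 p.2) / 2| ≤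
        ε' * ∑ u ∈ C, ∑ v ∈ Finset.univ.erase u, w u v :=
  cut_sparsifier_within_cluster_general ε' hε0 w w' hnn hcut
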